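/- arXiv:1901.01616 — 4 statements merged into one kernel-verified Lean document; each statement's English description precedes it below -/
import Mathlib

section
/- For n ≥ 2, if F is a family of simple graphs on the vertex set {1,...,n} such that for all G, H ∈ F the intersection graph G ∩ H (on the same vertex set, with edge set E(G) ∩ E(H)) is connected, then |F| ≤ 2^(C(n,2)) / 2^(n-1). -/
/-!
View a graph on `V` as its edge-indicator vector over `𝔽₂`. For `x : V → 𝔽₂` the cut vector `δx`
has `δx(ab) = x a + x b`; since `δ` kills exactly the constant functions, the cut space has
dimension `|V| - 1`. If `G ⊓ H` is connected and `G - H = δx`, then `x` agrees at the ends of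
every edge of `G ⊓ H` (both indicators are `1` there), so `x` is constant, `δx = 0` and `G = H`.
Hence a connected-intersecting family injects into the quotient of the edge space by the cut
space, which has `2^(C(n,2)) / 2^(n-1)` elements.
-/

open Module LinearMap

namespace SimpleGraph

variable {V : Type*}

theorem Preconnected.eq_of_forall_adj {G : SimpleGraph V} (hG : G.Preconnected) {β : Type*}
    {f : V → β} (hf : ∀ a b, G.Adj a b → f a = f b) (a b : V) : f a = f b := by
  obtain ⟨w⟩ := hG a b
  induction w with
  | nil => rfl
  | cons h _ ih => exact (hf _ _ h).trans ih

variable (V) in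
abbrev EdgeSpace := {e : Sym2 V // ¬ e.IsDiag} → ZMod 2

open Classical in
noncomputable def edgeIndicator (G : SimpleGraph V) : EdgeSpace V :=
  fun e => if e.1 ∈ G.edgeSet then 1 else 0

theorem edgeIndicator_injective : Function.Injective (edgeIndicator (V := V)) := by
  intro G H h
  rw [← edgeSet_inj]
  ext e
  by_cases he : e.IsDiag
  · exact iff_of_false (fun h => not_isDiag_of_mem_edgeSet G h he)
      (fun h => not_isDiag_of_mem_edgeSet H h he)
  · have := congrFun h ⟨e, he⟩
    simp only [edgeIndicator] at this
    split_ifs at this <;> simp_all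

variable (V) in
def cutMap : (V → ZMod 2) →ₗ[ZMod 2] EdgeSpace V where
  toFun x e := Sym2.lift ⟨fun a b => x a + x b, fun a b => add_comm _ _⟩ e.1
  map_add' x y := by
    funext ⟨e, _⟩
    induction e using Sym2.ind
    simp only [Sym2.lift_mk, Pi.add_apply]
    ring
  map_smul' c x := by
    funext ⟨e, _⟩
    induction e using Sym2.ind
    simp only [Sym2.lift_mk, Pi.smul_apply, smul_eq_mul, RingHom.id_apply]
    ring

@[simp]
theorem cutMap_mk (x : V → ZMod 2) (a b : V) (h : ¬ (s(a, b) : Sym2 V).IsDiag) :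
    cutMap V x ⟨s(a, b), h⟩ = x a + x b :=
  rfl

variable (V) in
abbrev cutSpace : Submodule (ZMod 2) (EdgeSpace V) := range (cutMap V)

theorem mem_ker_cutMap_iff {x : V → ZMod 2} : x ∈ ker (cutMap V) ↔ ∀ a b, x a = x b := by
  refine ⟨fun hx a b => ?_, fun hx => ?_⟩
  · by_cases hab : a = b
    · rw [hab]
    have := congrFun (mem_ker.mp hx) ⟨s(a, b), by simpa using hab⟩
    rw [cutMap_mk, Pi.zero_apply] at this
    exact CharTwo.add_eq_zero.mp this
  · ext ⟨e, _⟩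
    induction e using Sym2.ind with
    | _ a b => rw [cutMap_mk, hx a b, CharTwo.add_self_eq_zero, Pi.zero_apply]

theorem ker_cutMap : ker (cutMap V) = ZMod 2 ∙ 1 := by
  ext x
  rw [mem_ker_cutMap_iff, Submodule.mem_span_singleton]
  refine ⟨fun hx => ?_, ?_⟩
  · rcases isEmpty_or_nonempty V with hV | ⟨⟨a⟩⟩
    · exact ⟨0, Subsingleton.elim _ _⟩
    · exact ⟨x a, funext fun b => (mul_one _).trans (hx a b)⟩
  · rintro ⟨c, rfl⟩ a b
    rfl

theorem finrank_cutSpace [Fintype V] : finrank (ZMod 2) (cutSpace V) = Fintype.card V - 1 := by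
  have rank_nullity := finrank_range_add_finrank_ker (cutMap V)
  rw [finrank_fintype_fun_eq_card] at rank_nullity
  change finrank (ZMod 2) (range (cutMap V)) = _
  rcases isEmpty_or_nonempty V with hV | hV
  · rw [Fintype.card_eq_zero] at rank_nullity ⊢
    omega
  · rw [ker_cutMap, finrank_span_singleton one_ne_zero] at rank_nullity
    omega

theorem natCard_quotient_cutSpace [Fintype V] :
    Nat.card (EdgeSpace V ⧸ cutSpace V) =
      2 ^ (Fintype.card V).choose 2 / 2 ^ (Fintype.card V - 1) := by
  classical
  have h := (cutSpace V).finrank_quotient_add_finrank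
  rw [finrank_fintype_fun_eq_card, Sym2.card_subtype_not_diag, finrank_cutSpace] at h
  rw [natCard_eq_pow_finrank (K := ZMod 2), Nat.card_zmod, Nat.pow_div (by omega) two_pos]
  congr 1
  omega

theorem eq_of_preconnected_inf_of_sub_mem_cutSpace {G H : SimpleGraph V}
    (hGH : (G ⊓ H).Preconnected) (h : edgeIndicator G - edgeIndicator H ∈ cutSpace V) :
    G = H := by
  obtain ⟨x, hx⟩ := h
  have hx_adj : ∀ a b, (G ⊓ H).Adj a b → x a = x b := by
    intro a b hab
    have := congrFun hx ⟨s(a, b), by simpa using hab.ne⟩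
    simp only [cutMap_mk, Pi.sub_apply, edgeIndicator, mem_edgeSet, hab.1, hab.2, ↓reduceIte,
      sub_self] at this
    exact CharTwo.add_eq_zero.mp this
  have hx_zero : cutMap V x = 0 := mem_ker_cutMap_iff.mpr (hGH.eq_of_forall_adj hx_adj)
  exact edgeIndicator_injective (sub_eq_zero.mp (hx_zero ▸ hx).symm)

theorem ncard_le_of_preconnected_inf [Fintype V] {F : Set (SimpleGraph V)}
    (hF : ∀ G ∈ F, ∀ H ∈ F, (G ⊓ H).Preconnected) :
    F.ncard ≤ 2 ^ (Fintype.card V).choose 2 / 2 ^ (Fintype.card V - 1) := by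
  classical
  rw [← natCard_quotient_cutSpace, ← Set.ncard_univ]
  refine Set.ncard_le_ncard_of_injOn (fun G => Submodule.Quotient.mk (edgeIndicator G))
    (fun _ _ => Set.mem_univ _) fun G hG H hH hGH => ?_
  exact eq_of_preconnected_inf_of_sub_mem_cutSpace (hF G hG H hH)
    ((Submodule.Quotient.eq _).mp hGH)

end SimpleGraph

theorem connected_intersecting_bound_general (n : ℕ)
    (F : Set (SimpleGraph (Fin n)))
    (hF : ∀ G ∈ F, ∀ H ∈ F, (G ⊓ H).Connected) :
    F.ncard ≤ 2 ^ n.choose 2 / 2 ^ (n - 1) := by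
  simpa using SimpleGraph.ncard_le_of_preconnected_inf fun G hG H hH => (hF G hG H hH).preconnected

/-- A connected-intersecting family of graphs on `{1,…,n}` (`n ≥ 2`) has at most
`2^(C(n,2)) / 2^(n-1)` members. -/
theorem connected_intersecting_bound (n : ℕ) (hn : 2 ≤ n)
    (F : Set (SimpleGraph (Fin n)))
    (hF : ∀ G ∈ F, ∀ H ∈ F, (G ⊓ H).Connected) :
    F.ncard ≤ 2 ^ n.choose 2 / 2 ^ (n - 1) :=
  connected_intersecting_bound_general n F hF
end

section
/- If G1 and G2 are distinct graphs on {1,...,n} (n ≥ 2) lying in the same coset of the subspace W of complete bipartite graphs (i.e., G1 ⊕ G2 = B(S) for some S), then G1 ∩ G2 is disconnected. -/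
/-!
An edge of `G₁ ⊓ G₂` is not an edge of `G₁ ∆ G₂ = B S`, so it joins two vertices on the same
side of the cut `(S, Sᶜ)`. Since `G₁ ≠ G₂`, the graph `B S` has an edge, so both sides are
nonempty, and no walk in `G₁ ⊓ G₂` can cross between them.
-/

/-- `B S` is the complete bipartite graph with parts `S` and `Sᶜ`. -/
def B {n : ℕ} (S : Set (Fin n)) : SimpleGraph (Fin n) where
  Adj u v := (u ∈ S ∧ v ∉ S) ∨ (u ∉ S ∧ v ∈ S)
  symm := ⟨fun u v h => by tauto⟩
  loopless := ⟨fun u h => by tauto⟩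

namespace SimpleGraph

theorem Reachable.mem_iff_of_forall_adj {V : Type*} {G : SimpleGraph V} {S : Set V}
    (hS : ∀ u v, G.Adj u v → (u ∈ S ↔ v ∈ S)) {u v : V} (h : G.Reachable u v) :
    u ∈ S ↔ v ∈ S := by
  obtain ⟨w⟩ := h
  induction w with
  | nil => rfl
  | cons hadj _ ih => exact (hS _ _ hadj).trans ih

end SimpleGraph

theorem B_compl_adj_mem_iff {n : ℕ} {S : Set (Fin n)} {u v : Fin n} (h : (B S)ᶜ.Adj u v) :
    u ∈ S ↔ v ∈ S := by
  simp only [SimpleGraph.compl_adj, B] at h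
  tauto

theorem not_connected_B_compl {n : ℕ} {S : Set (Fin n)} (hS : B S ≠ ⊥) :
    ¬ (B S)ᶜ.Connected := by
  intro hconn
  obtain ⟨u, v, huv⟩ := SimpleGraph.ne_bot_iff_exists_adj.mp hS
  have hmem := (hconn.preconnected u v).mem_iff_of_forall_adj fun _ _ => B_compl_adj_mem_iff
  simp only [B] at huv
  tauto

theorem same_coset_inf_disconnected_general {n : ℕ}
    (G₁ G₂ : SimpleGraph (Fin n)) (hne : G₁ ≠ G₂)
    (h : ∃ S : Set (Fin n), symmDiff G₁ G₂ = B S) :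
    ¬ (G₁ ⊓ G₂).Connected := by
  obtain ⟨S, hS⟩ := h
  have hB : B S ≠ ⊥ := hS ▸ symmDiff_eq_bot.not.mpr hne
  have hle : G₁ ⊓ G₂ ≤ (B S)ᶜ :=
    hS ▸ le_compl_iff_disjoint_left.mpr (disjoint_symmDiff_inf G₁ G₂)
  exact fun hconn => not_connected_B_compl hB (hconn.mono hle)

/-- Distinct graphs in the same coset of the subspace of complete bipartite graphs
have disconnected intersection. -/
theorem same_coset_inf_disconnected {n : ℕ} (hn : 2 ≤ n)
    (G₁ G₂ : SimpleGraph (Fin n)) (hne : G₁ ≠ G₂)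
    (h : ∃ S : Set (Fin n), symmDiff G₁ G₂ = B S) :
    ¬ (G₁ ⊓ G₂).Connected :=
  same_coset_inf_disconnected_general G₁ G₂ hne h
end

section
/- Let A and B be vertex-disjoint trees on {1,...,n} whose vertex sets partition {1,...,n}, and let S be a set of edges between V(A) and V(B) with |S| odd. Let F be the family of all graphs G on {1,...,n} containing all edges of A and B and satisfying |E(G) ∩ S| > |S|/2. Then F is connected-intersecting: for all G, H ∈ F, G ∩ H is connected. -/
/-- Let `A` and `B` be trees on complementary nonempty vertex sets `VA` and `VAᶜ`, and
`S` an odd-sized set of edges between the two parts.  The family of graphs containing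
`A ∪ B` together with more than half the edges of `S` is connected-intersecting. -/
theorem two_trees_majority_connected_intersecting (n : ℕ)
    (VA : Set (Fin n)) (hVA : VA.Nonempty) (hVB : VAᶜ.Nonempty)
    (A B : SimpleGraph (Fin n))
    (hAsupp : ∀ u v, A.Adj u v → u ∈ VA ∧ v ∈ VA)
    (hBsupp : ∀ u v, B.Adj u v → u ∈ VAᶜ ∧ v ∈ VAᶜ)
    (hAconn : (A.induce VA).Connected) (hAacyclic : A.IsAcyclic)
    (hBconn : (B.induce VAᶜ).Connected) (hBacyclic : B.IsAcyclic)
    (S : Finset (Sym2 (Fin n)))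
    (hS : ∀ e ∈ S, ∃ a ∈ VA, ∃ b ∈ VAᶜ, e = s(a, b))
    (hodd : Odd S.card)
    (F : Set (SimpleGraph (Fin n)))
    (hF : F = {G | A ≤ G ∧ B ≤ G ∧ S.card < ((S : Set (Sym2 (Fin n))) ∩ G.edgeSet).ncard * 2}) :
    ∀ G ∈ F, ∀ H ∈ F, (G ⊓ H).Connected := by
  classical
  subst hF
  rintro G ⟨hGA, hGB, hGS⟩ H ⟨hHA, hHB, hHS⟩
  -- rewrite ncards as filter cards
  have hcard : ∀ K : SimpleGraph (Fin n),
      ((S : Set (Sym2 (Fin n))) ∩ K.edgeSet).ncard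
        = (S.filter (fun e => e ∈ K.edgeSet)).card := by
    intro K
    rw [← Set.ncard_coe_finset]
    congr 1
    ext e
    simp [Finset.mem_coe, Finset.mem_filter, Set.mem_inter_iff, and_comm]
  rw [hcard] at hGS hHS
  set s1 := S.filter (fun e => e ∈ G.edgeSet) with hs1
  set s2 := S.filter (fun e => e ∈ H.edgeSet) with hs2
  -- s1 ∩ s2 is nonempty
  have hsub : s1 ∪ s2 ⊆ S := by
    apply Finset.union_subset <;> exact Finset.filter_subset _ _
  have hle : (s1 ∪ s2).card ≤ S.card := Finset.card_le_card hsub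
  have hsum : s1.card + s2.card = (s1 ∪ s2).card + (s1 ∩ s2).card :=
    (Finset.card_union_add_card_inter s1 s2).symm
  have hne : (s1 ∩ s2).Nonempty := by
    rw [← Finset.card_pos]
    omega
  obtain ⟨e, he⟩ := hne
  rw [Finset.mem_inter, hs1, hs2, Finset.mem_filter, Finset.mem_filter] at he
  obtain ⟨⟨heS, heG⟩, _, heH⟩ := he
  obtain ⟨a, ha, b, hb, rfl⟩ := hS e heS
  have hab : (G ⊓ H).Adj a b := by
    constructor
    · exact (SimpleGraph.mem_edgeSet G).mp heG
    · exact (SimpleGraph.mem_edgeSet H).mp heH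
  have hAle : A ≤ G ⊓ H := le_inf hGA hHA
  have hBle : B ≤ G ⊓ H := le_inf hGB hHB
  -- every vertex of VA reaches a, every vertex of VAᶜ reaches b
  have reachA : ∀ v ∈ VA, (G ⊓ H).Reachable v a := by
    intro v hv
    have h := hAconn.preconnected ⟨v, hv⟩ ⟨a, ha⟩
    have h2 := h.map (SimpleGraph.Embedding.induce VA).toHom
    exact h2.mono hAle
  have reachB : ∀ v ∈ VAᶜ, (G ⊓ H).Reachable v b := by
    intro v hv
    have h := hBconn.preconnected ⟨v, hv⟩ ⟨b, hb⟩
    have h2 := h.map (SimpleGraph.Embedding.induce VAᶜ).toHom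
    exact h2.mono hBle
  have reach : ∀ v, (G ⊓ H).Reachable v a := by
    intro v
    by_cases hv : v ∈ VA
    · exact reachA v hv
    · exact (reachB v hv).trans hab.symm.reachable
  obtain ⟨x, hx⟩ := hVA
  have : Nonempty (Fin n) := ⟨x⟩
  exact SimpleGraph.Connected.mk (fun u v => (reach u).trans (reach v).symm)
end

section
/- Let Γ be a nonempty graph and t, x ≥ 0 integers. If F is a Γ-intersecting family of graphs on {1,...,n}, then the family F(t+x, t+2x) of graphs G on {1,...,(t+2x)n} for which at least t+x of the t+2x block-projections G_i belong to F, is Γ_t-intersecting, where Γ_t denotes t vertex-disjoint copies of Γ. -/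
/-- The embedding of the `i`-th block of `n` vertices into `{1,…,b·n}`. -/
def blockEmb (n b : ℕ) (i : Fin b) (v : Fin n) : Fin (b * n) :=
  ⟨i.1 * n + v.1, lt_of_lt_of_le
    (by have := v.2; rw [Nat.succ_mul]; omega : i.1 * n + v.1 < (i.1 + 1) * n)
    (Nat.mul_le_mul_right n i.2)⟩

/-- The `i`-th block projection of a graph on `{1,…,b·n}`, relabeled to `{1,…,n}`. -/
def blockProj {n b : ℕ} (G : SimpleGraph (Fin (b * n))) (i : Fin b) :
    SimpleGraph (Fin n) where
  Adj u v := G.Adj (blockEmb n b i u) (blockEmb n b i v)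
  symm := ⟨by intro u v h; exact G.adj_symm h⟩
  loopless := ⟨by intro u h; exact G.irrefl h⟩

/-- The family `F(a,b)` of graphs on `{1,…,b·n}` at least `a` of whose `b` block
projections lie in `F`. -/
def blockFamily {n : ℕ} (F : Set (SimpleGraph (Fin n))) (a b : ℕ) :
    Set (SimpleGraph (Fin (b * n))) :=
  {G | a ≤ {i : Fin b | blockProj G i ∈ F}.ncard}

/-- `G` contains a copy of `Γ`. -/
def ContainsCopy {α β : Type*} (Γ : SimpleGraph α) (G : SimpleGraph β) : Prop :=
  ∃ f : α ↪ β, ∀ a b, Γ.Adj a b → G.Adj (f a) (f b)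

/-- `t` vertex-disjoint copies of `Γ`. -/
def disjointUnion {α : Type*} (Γ : SimpleGraph α) (t : ℕ) : SimpleGraph (α × Fin t) where
  Adj x y := x.2 = y.2 ∧ Γ.Adj x.1 y.1
  symm := ⟨by intro x y h; exact ⟨h.1.symm, Γ.adj_symm h.2⟩⟩
  loopless := ⟨by intro x h; exact Γ.irrefl h.2⟩

/-! Two graphs of `F(t+x, t+2x)` each have at least `t + x` of their `t + 2x` block projections in
`F`, so by inclusion–exclusion they share at least `t` such blocks. In each shared block the two
projections, and hence `G ⊓ H`, contain a copy of `Γ`; copies in distinct blocks are vertex-disjoint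
and together form `Γ_t`. -/

theorem blockEmb_eq_iff {n b : ℕ} {i j : Fin b} {u v : Fin n} :
    blockEmb n b i u = blockEmb n b j v ↔ i = j ∧ u = v := by
  have h_eq : ∀ (i : Fin b) (u : Fin n), blockEmb n b i u = finProdFinEquiv (i, u) := by
    intro i u
    ext
    simp only [blockEmb, finProdFinEquiv_apply_val]
    ring
  rw [h_eq, h_eq, finProdFinEquiv.apply_eq_iff_eq, Prod.mk.injEq]

theorem containsCopy_disjointUnion_of_blockProj {α : Type*} {Γ : SimpleGraph α} {t n b : ℕ}
    {G : SimpleGraph (Fin (b * n))} (σ : Fin t ↪ Fin b)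
    (h : ∀ j, ContainsCopy Γ (blockProj G (σ j))) :
    ContainsCopy (disjointUnion Γ t) G := by
  choose f hf using h
  refine ⟨⟨fun p => blockEmb n b (σ p.2) (f p.2 p.1), ?_⟩, ?_⟩
  · rintro ⟨a, j⟩ ⟨a', j'⟩ hp
    obtain ⟨hσ, hf'⟩ := blockEmb_eq_iff.mp hp
    obtain rfl : j = j' := σ.injective hσ
    obtain rfl : a = a' := (f j).injective hf'
    rfl
  · rintro ⟨a, j⟩ ⟨a', j'⟩ ⟨rfl, hadj⟩
    exact hf j a a' hadj

theorem Set.ncard_add_ncard_le_ncard_inter_add_card {β : Type*} [Finite β] (A B : Set β) :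
    A.ncard + B.ncard ≤ (A ∩ B).ncard + Nat.card β := by
  rw [← Set.ncard_inter_add_ncard_union A B]
  exact Nat.add_le_add_left (Set.ncard_le_card _) _

theorem Set.exists_embedding_fin_of_le_ncard {β : Type*} [Finite β] {S : Set β} {t : ℕ}
    (ht : t ≤ S.ncard) : ∃ σ : Fin t ↪ β, ∀ j, σ j ∈ S := by
  have := Fintype.ofFinite S
  obtain ⟨e⟩ := Function.Embedding.nonempty_of_card_le (α := Fin t) (β := S)
    (by rwa [Fintype.card_fin, ← Nat.card_eq_fintype_card, Nat.card_coe_set_eq])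
  exact ⟨e.trans (Function.Embedding.subtype _), fun j => (e j).2⟩

theorem blockFamily_gamma_t_intersecting_general {α : Type*} (Γ : SimpleGraph α)
    (t x n : ℕ)
    (F : Set (SimpleGraph (Fin n)))
    (hF : ∀ G ∈ F, ∀ H ∈ F, ContainsCopy Γ (G ⊓ H)) :
    ∀ G ∈ blockFamily F (t + x) (t + 2 * x), ∀ H ∈ blockFamily F (t + x) (t + 2 * x),
      ContainsCopy (disjointUnion Γ t) (G ⊓ H) := by
  intro G hG H hH
  have h_common : t ≤ ({i | blockProj G i ∈ F} ∩ {i | blockProj H i ∈ F}).ncard := by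
    have h_incl_excl := Set.ncard_add_ncard_le_ncard_inter_add_card
      {i | blockProj G i ∈ F} {i | blockProj H i ∈ F}
    rw [Nat.card_fin] at h_incl_excl
    change t + x ≤ _ at hG hH
    omega
  obtain ⟨σ, hσ⟩ := Set.exists_embedding_fin_of_le_ncard h_common
  -- `blockProj (G ⊓ H) i` is definitionally `blockProj G i ⊓ blockProj H i`.
  exact containsCopy_disjointUnion_of_blockProj σ fun j => hF _ (hσ j).1 _ (hσ j).2

/-- If `F` is `Γ`-intersecting, then `F(t+x, t+2x)` is `Γ_t`-intersecting. -/
theorem blockFamily_gamma_t_intersecting {α : Type*} (Γ : SimpleGraph α)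
    (hΓ : Γ.edgeSet.Nonempty) (t x n : ℕ)
    (F : Set (SimpleGraph (Fin n)))
    (hF : ∀ G ∈ F, ∀ H ∈ F, ContainsCopy Γ (G ⊓ H)) :
    ∀ G ∈ blockFamily F (t + x) (t + 2 * x), ∀ H ∈ blockFamily F (t + x) (t + 2 * x),
      ContainsCopy (disjointUnion Γ t) (G ⊓ H) :=
  blockFamily_gamma_t_intersecting_general Γ t x n F hF
end
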